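/- Under the symbol construction for Sp_{2n} with p = 2 (section 3.6(c)), any two semi-intervals I = {a, …, b} and I' = {a', …, b'} of a distinguished symbol with b' < a satisfy a − b' ≥ 3, where the semi-intervals arise from distinct parts h < h' of λ via the recipes I_h^1 = {a, a+2, a+4, …}, I_h^0 = {a, a, a+4, a+4, …}, I_h^ω = {a, a+1, a+4, a+5, …}. Moreover equality a − b' = 3 occurs only in the configurations (I_h^1, I_{h+2}^1), (I_h^1, I_{h+1}^ω), (I_h^ω, I_{h+1}^1). -/
import Mathlib


/-- The label `ε(h) ∈ {1, 0, ω}` of a part of the partition. -/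
inductive EpsLabel | one | zero | om
deriving DecidableEq

/-- The tail (smallest entry) of the semi-interval attached to the block of a
part `h` with label `ε`, the block starting at position `i`:
`h/2 + 2i` if `ε = 1`, `(h+2)/2 + 2i` if `ε = 0`, `(h+1)/2 + 2i` if `ε = ω`. -/
def tailEntry : EpsLabel → ℕ → ℕ → ℕ
  | .one, h, i => h / 2 + 2 * i
  | .zero, h, i => (h + 2) / 2 + 2 * i
  | .om, h, i => (h + 1) / 2 + 2 * i

/-- The head (largest entry) of the semi-interval of the block of `h` with
label `ε` and multiplicity `c`, starting at position `i`:
`I_h^1 = {a, a+2, …, a+2(c-1)}`, `I_h^0 = {a, a, a+4, a+4, …, a+2c-4}`,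
`I_h^ω = {a, a+1, a+4, a+5, …, a+2c-3}`. -/
def headEntry : EpsLabel → ℕ → ℕ → ℕ → ℕ
  | .one, h, i, c => h / 2 + 2 * i + 2 * (c - 1)
  | .zero, h, i, c => (h + 2) / 2 + 2 * i + (2 * c - 4)
  | .om, h, i, c => (h + 1) / 2 + 2 * i + (2 * c - 3)

/-- Validity of a block: `ε = 1` needs `h` even and `c ≥ 1`; `ε = 0` needs `h`
even and `c` even, `c ≥ 2`; `ε = ω` needs `h` odd and `c` even, `c ≥ 2`. -/
def ValidBlock : EpsLabel → ℕ → ℕ → Prop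
  | .one, h, c => Even h ∧ 1 ≤ c
  | .zero, h, c => Even h ∧ Even c ∧ 2 ≤ c
  | .om, h, c => Odd h ∧ Even c ∧ 2 ≤ c

/-- For the symbol of `Sp_{2n}`, `p = 2`, any two semi-intervals
coming from parts `h < h'` (the block of `h` at positions `i, …, i+c-1`, the
block of `h'` starting at a later position `i' ≥ i + c`) are at distance
`a - b' ≥ 3`, where `b'` is the head of the earlier and `a` the tail of the
later semi-interval; equality `a - b' = 3` occurs only in the configurations
`(I_h^1, I_{h+2}^1)`, `(I_h^1, I_{h+1}^ω)`, `(I_h^ω, I_{h+1}^1)`. -/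
theorem stmt17 (h h' c c' i i' : ℕ) (ℓ ℓ' : EpsLabel)
    (hv : ValidBlock ℓ h c) (hv' : ValidBlock ℓ' h' c')
    (hlt : h < h') (hi' : i + c ≤ i') :
    3 ≤ tailEntry ℓ' h' i' - headEntry ℓ h i c ∧
    (tailEntry ℓ' h' i' - headEntry ℓ h i c = 3 →
      (ℓ = .one ∧ ℓ' = .one ∧ h' = h + 2) ∨
      (ℓ = .one ∧ ℓ' = .om ∧ h' = h + 1) ∨
      (ℓ = .om ∧ ℓ' = .one ∧ h' = h + 1)) := by
  cases ℓ <;> cases ℓ' <;>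
    simp only [ValidBlock, tailEntry, headEntry, Nat.even_iff, Nat.odd_iff] at hv hv' ⊢ <;>
    refine ⟨by omega, fun heq => ?_⟩ <;>
    simp only [reduceCtorEq, false_and, and_false, or_false,
      false_or, true_and, and_true, and_self] <;>
    omega
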